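/- arXiv:1910.13889 — 4 statements merged into one kernel-verified Lean document; each statement's English description precedes it below -/
import Mathlib

section
/- Under Assumptions 1 and 2, in the partial approach with θ_TX = θ0, if D_KL[L(θ0)||P(θ0^c)] > 0, then for every agent k the belief in the true hypothesis converges to one almost surely: lim_{i→∞} μ_{k,i}(θ0) = 1 almost surely. -/
/-!
From time one on, every agent's belief is uniform over the hypotheses `θ ≠ θ₀` (they are all
shared as the same value `ψ̂`), so agent `k` is described by its log-odds
`λₖ,ᵢ = log (μₖ,ᵢ(θ₀) / μₖ,ᵢ(θ₁))` against a fixed `θ₁ ≠ θ₀`, and `μₖ,ᵢ(θ₀) → 1` iff `λₖ,ᵢ → ∞`.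
The partial-sharing update turns the log-odds into the linear recursion `λᵢ₊₁ = (λᵢ + zᵢ) ᵥ* A`
driven by the i.i.d. innovations `zℓ,ᵢ = log (L(ξℓ,ᵢ|θ₀) / P(ξℓ,ᵢ|θ₀ᶜ))` of mean
`D_KL[L(θ₀)‖P(θ₀ᶜ)] > 0`. The powers of the primitive matrix `A` converge to `v 1ᵀ`, so by the
strong law of large numbers `λₖ,ᵢ / i → ∑ₗ vₗ D_KL = D_KL > 0`.
-/

open MeasureTheory ProbabilityTheory Filter Finset Topology Real Matrix

lemma tendsto_sub_shift_div_zero {S : ℕ → ℝ} {E : ℝ} (hS : Tendsto (fun n => S n / n) atTop (𝓝 E))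
    (p : ℕ) : Tendsto (fun n => (S n - S (n - p)) / n) atTop (𝓝 0) := by
  have hshift : Tendsto (fun n => S (n - p) / n) atTop (𝓝 E) := by
    refine (tendsto_add_atTop_iff_nat p).1 ?_
    have := hS.mul (tendsto_natCast_div_add_atTop (p : ℝ))
    rw [mul_one] at this
    refine this.congr' ((eventually_ne_atTop 0).mono fun n hn => ?_)
    have : (n : ℝ) ≠ 0 := by exact_mod_cast hn
    simp only [Nat.add_sub_cancel, Nat.cast_add]
    field_simp
  simpa [sub_div] using hS.sub hshift

lemma abs_sum_range_mul_le {a z : ℕ → ℝ} {B δ : ℝ} {p : ℕ} (hB : ∀ q, |a q| ≤ B) (hδ : 0 ≤ δ)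
    (hp : ∀ q ≥ p, |a q| ≤ δ) (n : ℕ) :
    |∑ j ∈ range n, a (n - j) * z j| ≤
      δ * ∑ j ∈ range n, |z j| + B * (∑ j ∈ range n, |z j| - ∑ j ∈ range (n - p), |z j|) := by
  have hsplit := sum_range_add_sum_Ico (fun j => |z j|) (Nat.sub_le n p)
  have hhead : ∑ j ∈ range (n - p), |a (n - j) * z j| ≤ δ * ∑ j ∈ range (n - p), |z j| := by
    rw [mul_sum]
    refine sum_le_sum fun j hj => ?_
    rw [abs_mul]
    exact mul_le_mul_of_nonneg_right (hp _ (by have := mem_range.1 hj; omega)) (abs_nonneg _)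
  have htail : ∑ j ∈ Ico (n - p) n, |a (n - j) * z j| ≤ B * ∑ j ∈ Ico (n - p) n, |z j| := by
    rw [mul_sum]
    refine sum_le_sum fun j _ => ?_
    rw [abs_mul]
    exact mul_le_mul_of_nonneg_right (hB _) (abs_nonneg _)
  calc |∑ j ∈ range n, a (n - j) * z j| ≤ ∑ j ∈ range n, |a (n - j) * z j| :=
        abs_sum_le_sum_abs _ _
    _ = ∑ j ∈ range (n - p), |a (n - j) * z j| + ∑ j ∈ Ico (n - p) n, |a (n - j) * z j| :=
        (sum_range_add_sum_Ico _ (Nat.sub_le n p)).symm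
    _ ≤ δ * ∑ j ∈ range (n - p), |z j| + B * ∑ j ∈ Ico (n - p) n, |z j| := add_le_add hhead htail
    _ ≤ _ := by
        rw [← hsplit, add_sub_cancel_left]
        gcongr
        exact le_add_of_nonneg_right (sum_nonneg fun j _ => abs_nonneg _)

lemma tendsto_sum_range_mul_div_zero {a z : ℕ → ℝ} {E : ℝ} (ha : Tendsto a atTop (𝓝 0))
    (hz : Tendsto (fun n => (∑ j ∈ range n, |z j|) / n) atTop (𝓝 E)) :
    Tendsto (fun n => (∑ j ∈ range n, a (n - j) * z j) / n) atTop (𝓝 0) := by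
  set S : ℕ → ℝ := fun n => ∑ j ∈ range n, |z j|
  obtain ⟨B, hB⟩ := ha.abs.bddAbove_range
  rw [Metric.tendsto_nhds]
  intro ε hε
  obtain ⟨δ, hδ, hδE⟩ := exists_pos_mul_lt hε E
  obtain ⟨p, hp⟩ := Metric.tendsto_atTop.1 ha δ hδ
  have hbound := abs_sum_range_mul_le (z := z) (fun q => hB ⟨q, rfl⟩) hδ.le
    (fun q hq => by simpa using (hp q hq).le)
  have hlim := (hz.const_mul δ).add ((tendsto_sub_shift_div_zero hz p).const_mul B)
  rw [mul_zero, add_zero] at hlim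
  filter_upwards [hlim.eventually (gt_mem_nhds (by linarith : δ * E < ε)),
    eventually_gt_atTop 0] with n hn hn0
  have hn0' : (0 : ℝ) < n := by exact_mod_cast hn0
  rw [Real.dist_eq, sub_zero, abs_div, Nat.abs_cast, div_lt_iff₀ hn0']
  calc _ ≤ δ * S n + B * (S n - S (n - p)) := hbound n
    _ = (δ * (S n / n) + B * ((S n - S (n - p)) / n)) * n := by field_simp
    _ < ε * n := by gcongr

lemma tendsto_sum_range_mul_div {w z : ℕ → ℝ} {c D E : ℝ} (hw : Tendsto w atTop (𝓝 c))
    (hz : Tendsto (fun n => (∑ j ∈ range n, z j) / n) atTop (𝓝 D))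
    (hz_abs : Tendsto (fun n => (∑ j ∈ range n, |z j|) / n) atTop (𝓝 E)) :
    Tendsto (fun n => (∑ j ∈ range n, w (n - j) * z j) / n) atTop (𝓝 (c * D)) := by
  have hsmall := tendsto_sum_range_mul_div_zero (a := fun p => w p - c)
    (by simpa using hw.sub_const c) hz_abs
  have := (hz.const_mul c).add hsmall
  rw [add_zero] at this
  refine this.congr fun n => ?_
  simp only [sub_mul, sum_sub_distrib, ← mul_sum]
  ring

namespace Matrix

variable {ι : Type*} [Fintype ι] [DecidableEq ι]

lemma vecMul_apply_le_of_le {B : Matrix ι ι ℝ} (hB : B ∈ colStochastic ℝ ι) {c : ℝ}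
    (hc : ∀ j k, c ≤ B j k) {r : ι → ℝ} {M : ℝ} (hr : ∀ j, r j ≤ M) (k : ι) :
    (r ᵥ* B) k ≤ c * ∑ j, r j + (1 - Fintype.card ι * c) * M := by
  calc (r ᵥ* B) k = c * ∑ j, r j + ∑ j, r j * (B j k - c) := by
        simp only [vecMul, dotProduct, mul_sub, sum_sub_distrib, mul_sum]
        ring_nf
    _ ≤ c * ∑ j, r j + ∑ j, M * (B j k - c) := by
        gcongr with j
        · exact sub_nonneg.2 (hc j k)
        · exact hr j
    _ = c * ∑ j, r j + (1 - Fintype.card ι * c) * M := by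
        rw [← mul_sum, sum_sub_distrib, sum_col_of_mem_colStochastic hB, sum_const, card_univ,
          nsmul_eq_mul]
        ring

lemma le_vecMul_apply_of_le {B : Matrix ι ι ℝ} (hB : B ∈ colStochastic ℝ ι) {c : ℝ}
    (hc : ∀ j k, c ≤ B j k) {r : ι → ℝ} {m : ℝ} (hr : ∀ j, m ≤ r j) (k : ι) :
    c * ∑ j, r j + (1 - Fintype.card ι * c) * m ≤ (r ᵥ* B) k := by
  have := vecMul_apply_le_of_le hB hc (r := -r) (M := -m) (fun j => neg_le_neg (hr j)) k
  simp only [neg_vecMul, Pi.neg_apply, sum_neg_distrib] at this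
  linarith

section

variable [Nonempty ι]

lemma sup'_vecMul_sub_inf'_vecMul_le {B : Matrix ι ι ℝ} (hB : B ∈ colStochastic ℝ ι) {c : ℝ}
    (hc : ∀ j k, c ≤ B j k) (r : ι → ℝ) :
    univ.sup' univ_nonempty (r ᵥ* B) - univ.inf' univ_nonempty (r ᵥ* B) ≤
      (1 - Fintype.card ι * c) * (univ.sup' univ_nonempty r - univ.inf' univ_nonempty r) := by
  have hsup := sup'_le univ_nonempty (r ᵥ* B) fun k _ => vecMul_apply_le_of_le hB hc
    (M := univ.sup' univ_nonempty r) (fun j => le_sup' r (mem_univ j)) k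
  have hinf := le_inf' univ_nonempty (r ᵥ* B) fun k _ => le_vecMul_apply_of_le hB hc
    (m := univ.inf' univ_nonempty r) (fun j => inf'_le r (mem_univ j)) k
  linarith

theorem exists_tendsto_vecMul_pow {A : Matrix ι ι ℝ} (hA : A ∈ colStochastic ℝ ι)
    (hprim : ∃ m : ℕ, ∀ i j, 0 < (A ^ m) i j) (r : ι → ℝ) :
    ∃ a, ∀ k, Tendsto (fun p => (r ᵥ* A ^ p) k) atTop (𝓝 a) := by
  obtain ⟨m, hm⟩ := hprim
  -- the row maximum `hi` decreases, the row minimum `lo` increases, and every `m` steps their gap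
  -- contracts by the factor `1 - #ι c < 1`, so both converge to the same limit
  set hi : ℕ → ℝ := fun p => univ.sup' univ_nonempty (r ᵥ* A ^ p)
  set lo : ℕ → ℝ := fun p => univ.inf' univ_nonempty (r ᵥ* A ^ p)
  have hstep : ∀ p q, r ᵥ* A ^ (p + q) = (r ᵥ* A ^ p) ᵥ* A ^ q := fun p q => by
    rw [vecMul_vecMul, pow_add]
  have hlo_le_hi : ∀ p, lo p ≤ hi p := fun p =>
    (inf'_le _ (mem_univ (Classical.arbitrary ι))).trans (le_sup' _ (mem_univ _))
  have hnonneg : ∀ j k, (0 : ℝ) ≤ A j k := fun j k => nonneg_of_mem_colStochastic hA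
  have hhi : Antitone hi := antitone_nat_of_succ_le fun p => by
    have := sup'_le univ_nonempty ((r ᵥ* A ^ p) ᵥ* A) fun k _ => vecMul_apply_le_of_le hA hnonneg
      (M := hi p) (fun j => le_sup' (r ᵥ* A ^ p) (mem_univ j)) k
    simpa [hi, hstep p 1] using this
  have hlo : Monotone lo := monotone_nat_of_le_succ fun p => by
    have := le_inf' univ_nonempty ((r ᵥ* A ^ p) ᵥ* A) fun k _ => le_vecMul_apply_of_le hA hnonneg
      (m := lo p) (fun j => inf'_le (r ᵥ* A ^ p) (mem_univ j)) k
    simpa [lo, hstep p 1] using this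
  have hhi_lim := tendsto_atTop_ciInf hhi
    ⟨lo 0, fun _ ⟨p, hp⟩ => hp ▸ (hlo p.zero_le).trans (hlo_le_hi p)⟩
  have hlo_lim := tendsto_atTop_ciSup hlo
    ⟨hi 0, fun _ ⟨p, hp⟩ => hp ▸ (hlo_le_hi p).trans (hhi p.zero_le)⟩
  obtain ⟨c, hc_pos, hc⟩ : ∃ c > 0, ∀ i j, c ≤ (A ^ m) i j := by
    obtain ⟨⟨i₀, j₀⟩, -, hmin⟩ := univ.exists_min_image (fun ij : ι × ι => (A ^ m) ij.1 ij.2)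
      univ_nonempty
    exact ⟨_, hm i₀ j₀, fun i j => hmin (i, j) (mem_univ _)⟩
  have hcontract : ∀ p, hi (p + m) - lo (p + m) ≤ (1 - Fintype.card ι * c) * (hi p - lo p) :=
    fun p => by
      simpa only [hi, lo, hstep p m] using
        sup'_vecMul_sub_inf'_vecMul_le (pow_mem hA m) hc (r ᵥ* A ^ p)
  have hshift := (hhi_lim.sub hlo_lim).comp (tendsto_add_atTop_nat m)
  have hlim := le_of_tendsto_of_tendsto' hshift ((hhi_lim.sub hlo_lim).const_mul _) hcontract
  have hle := le_of_tendsto_of_tendsto' hlo_lim hhi_lim hlo_le_hi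
  have hcard : (0 : ℝ) < Fintype.card ι * c := mul_pos (by exact_mod_cast Fintype.card_pos) hc_pos
  have heq : (⨅ p, hi p) = ⨆ p, lo p := by nlinarith
  exact ⟨⨅ p, hi p, fun k => tendsto_of_tendsto_of_tendsto_of_le_of_le (heq ▸ hlo_lim) hhi_lim
    (fun p => inf'_le _ (mem_univ k)) (fun p => le_sup' _ (mem_univ k))⟩

theorem exists_tendsto_pow_apply {A : Matrix ι ι ℝ} (hA : A ∈ colStochastic ℝ ι)
    (hprim : ∃ m : ℕ, ∀ i j, 0 < (A ^ m) i j) :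
    ∃ u : ι → ℝ, ∑ i, u i = 1 ∧ ∀ i j, Tendsto (fun p => (A ^ p) i j) atTop (𝓝 (u i)) := by
  choose u hu using fun i => exists_tendsto_vecMul_pow hA hprim (Pi.single i 1)
  simp only [single_one_vecMul, row_apply] at hu
  obtain ⟨j⟩ := ‹Nonempty ι›
  refine ⟨u, tendsto_nhds_unique (tendsto_finsetSum _ fun i _ => hu i j) ?_, hu⟩
  simp only [sum_col_of_mem_colStochastic (pow_mem hA _), tendsto_const_nhds]

end

theorem eq_vecMul_pow_add_sum_of_succ {R : Type*} [Semiring R] {A : Matrix ι ι R}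
    {x z : ℕ → ι → R} (hx : ∀ n, x (n + 1) = (x n + z n) ᵥ* A) (n : ℕ) :
    x n = x 0 ᵥ* A ^ n + ∑ j ∈ range n, z j ᵥ* A ^ (n - j) := by
  induction n with
  | zero => simp
  | succ n ih =>
    have hpow : ∀ j ∈ range n, z j ᵥ* A ^ (n + 1 - j) = (z j ᵥ* A ^ (n - j)) ᵥ* A := by
      intro j hj
      rw [vecMul_vecMul, ← pow_succ, Nat.sub_add_comm (mem_range.1 hj).le]
    rw [hx, ih, sum_range_succ, sum_congr rfl hpow, Nat.add_sub_cancel_left, pow_one, pow_succ,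
      ← vecMul_vecMul, ← sum_vecMul, add_vecMul, add_vecMul, add_assoc]

theorem tendsto_apply_div_of_eq_vecMul {A : Matrix ι ι ℝ} {u : ι → ℝ}
    (hA : ∀ i j, Tendsto (fun p => (A ^ p) i j) atTop (𝓝 (u i)))
    {x z : ℕ → ι → ℝ} (hx : ∀ n, x (n + 1) = (x n + z n) ᵥ* A) {D E : ι → ℝ}
    (hz : ∀ i, Tendsto (fun n => (∑ j ∈ range n, z j i) / n) atTop (𝓝 (D i)))
    (hz_abs : ∀ i, Tendsto (fun n => (∑ j ∈ range n, |z j i|) / n) atTop (𝓝 (E i))) (k : ι) :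
    Tendsto (fun n => x n k / n) atTop (𝓝 (∑ i, u i * D i)) := by
  have hinit : Tendsto (fun n : ℕ => (x 0 ᵥ* A ^ n) k / n) atTop (𝓝 0) :=
    (tendsto_finsetSum _ fun i _ => (hA i k).const_mul (x 0 i)).div_atTop
      tendsto_natCast_atTop_atTop
  have hinput := tendsto_finsetSum univ fun i _ =>
    tendsto_sum_range_mul_div (hA i k) (hz i) (hz_abs i)
  have := hinit.add hinput
  rw [zero_add] at this
  refine this.congr fun n => ?_
  rw [eq_vecMul_pow_add_sum_of_succ hx n, Pi.add_apply, add_div, Finset.sum_apply, ← sum_div]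
  simp only [vecMul, dotProduct, mul_comm (z _ _)]
  rw [sum_comm]

end Matrix

lemma abs_log_div_mean_le_sum {α : Type*} {s : Finset α} (hs : s.Nonempty) {a : ℝ} (ha : 0 < a)
    {b : α → ℝ} (hb : ∀ τ ∈ s, 0 < b τ) :
    |log (a / ((#s : ℝ)⁻¹ * ∑ τ ∈ s, b τ))| ≤ ∑ τ ∈ s, |log (a / b τ)| := by
  set m := (#s : ℝ)⁻¹ * ∑ τ ∈ s, b τ
  have hsum : ∑ _τ ∈ s, m = ∑ τ ∈ s, b τ := by
    have : (#s : ℝ) ≠ 0 := by exact_mod_cast hs.card_pos.ne'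
    simp only [sum_const, nsmul_eq_mul, m]
    field_simp
  -- the mean lies between two of the averaged values
  obtain ⟨τ₁, hτ₁, h₁⟩ := exists_le_of_sum_le hs hsum.ge
  obtain ⟨τ₂, hτ₂, h₂⟩ := exists_le_of_sum_le hs hsum.le
  have hm : 0 < m := (hb τ₁ hτ₁).trans_le h₁
  have hlo : log (a / b τ₂) ≤ log (a / m) :=
    log_le_log (div_pos ha (hb τ₂ hτ₂)) (div_le_div_of_nonneg_left ha.le hm h₂)
  have hhi : log (a / m) ≤ log (a / b τ₁) :=
    log_le_log (div_pos ha hm) (div_le_div_of_nonneg_left ha.le (hb τ₁ hτ₁) h₁)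
  have hle : ∀ τ ∈ s, |log (a / b τ)| ≤ ∑ τ ∈ s, |log (a / b τ)| := fun τ hτ =>
    single_le_sum (f := fun τ => |log (a / b τ)|) (fun _ _ => abs_nonneg _) hτ
  rw [abs_le]
  constructor
  · linarith [neg_abs_le (log (a / b τ₂)), hle τ₂ hτ₂]
  · linarith [le_abs_self (log (a / b τ₁)), hle τ₁ hτ₁]

lemma exp_div_sum_exp_pos {Θ : Type*} [Fintype Θ] (x : Θ → ℝ) (θ : Θ) :
    0 < exp (x θ) / ∑ θ', exp (x θ') :=
  div_pos (exp_pos _) (sum_pos (fun _ _ => exp_pos _) ⟨θ, mem_univ θ⟩)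

lemma sum_exp_div_sum_exp {Θ : Type*} [Fintype Θ] [Nonempty Θ] (x : Θ → ℝ) :
    ∑ θ, exp (x θ) / ∑ θ', exp (x θ') = 1 := by
  rw [← sum_div, div_self (sum_pos (fun _ _ => exp_pos _) univ_nonempty).ne']

lemma log_exp_div_sum_exp_div {Θ : Type*} [Fintype Θ] (x : Θ → ℝ) (θ θ' : Θ) :
    log ((exp (x θ) / ∑ τ, exp (x τ)) / (exp (x θ') / ∑ τ, exp (x τ))) = x θ - x θ' := by
  rw [div_div_div_cancel_right₀ (sum_pos (fun _ _ => exp_pos _) ⟨θ, mem_univ θ⟩).ne', ← exp_sub,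
    log_exp]

section PartialSharing

variable {Θ : Type*} [Fintype Θ] [DecidableEq Θ]

/-- The paper's `P(ξ|θᶜ)`, as a function of the likelihood vector `l = (L(ξ|τ))_τ`. -/
noncomputable def complMean (l : Θ → ℝ) (θ : Θ) : ℝ :=
  ((Fintype.card Θ : ℝ) - 1)⁻¹ * ∑ τ ∈ univ.erase θ, l τ

lemma cast_card_univ_erase (θ : Θ) : (#(univ.erase θ) : ℝ) = Fintype.card Θ - 1 := by
  rw [card_erase_of_mem (mem_univ θ), card_univ,
    Nat.cast_sub (Fintype.card_pos_iff.2 ⟨θ⟩)]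
  simp

lemma complMean_pos [Nontrivial Θ] {l : Θ → ℝ} (hl : ∀ τ, 0 < l τ) (θ : Θ) :
    0 < complMean l θ := by
  obtain ⟨θ', hθ'⟩ := exists_ne θ
  have hne : (univ.erase θ).Nonempty := ⟨θ', mem_erase.2 ⟨hθ', mem_univ _⟩⟩
  rw [complMean, ← cast_card_univ_erase]
  exact mul_pos (inv_pos.2 (by exact_mod_cast hne.card_pos)) (sum_pos (fun τ _ => hl τ) hne)

lemma abs_log_div_complMean_le [Nontrivial Θ] {l : Θ → ℝ} (hl : ∀ τ, 0 < l τ) (θ : Θ) :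
    |log (l θ / complMean l θ)| ≤ ∑ τ ∈ univ.erase θ, |log (l θ / l τ)| := by
  obtain ⟨θ', hθ'⟩ := exists_ne θ
  rw [complMean, ← cast_card_univ_erase]
  exact abs_log_div_mean_le_sum ⟨θ', mem_erase.2 ⟨hθ', mem_univ _⟩⟩ (hl θ) fun τ _ => hl τ

/-- The left side is `ψ(θ₀) / ψ̂(θ₁)`, where `ψ` is the Bayes update of the belief `b` on the
likelihood vector `l`. -/
lemma bayes_partial_odds_eq {b l : Θ → ℝ} (hb : ∀ θ, 0 < b θ) (hl : ∀ θ, 0 < l θ) {θ₀ θ₁ : Θ}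
    (h₁ : θ₁ ≠ θ₀) (huni : ∀ τ ≠ θ₀, b τ = b θ₁) :
    (b θ₀ * l θ₀ / ∑ θ, b θ * l θ) / ((1 - b θ₀ * l θ₀ / ∑ θ, b θ * l θ) /
      ((Fintype.card Θ : ℝ) - 1)) = b θ₀ / b θ₁ * (l θ₀ / complMean l θ₀) := by
  have hS : ∑ θ, b θ * l θ = b θ₀ * l θ₀ + b θ₁ * ∑ τ ∈ univ.erase θ₀, l τ := by
    rw [← add_sum_erase _ _ (mem_univ θ₀), mul_sum]
    exact congrArg _ (sum_congr rfl fun τ hτ => by rw [huni τ (ne_of_mem_erase hτ)])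
  have hsum : 0 < ∑ τ ∈ univ.erase θ₀, l τ :=
    sum_pos (fun τ _ => hl τ) ⟨θ₁, mem_erase.2 ⟨h₁, mem_univ _⟩⟩
  have hS_pos : 0 < ∑ θ, b θ * l θ :=
    hS ▸ add_pos (mul_pos (hb θ₀) (hl θ₀)) (mul_pos (hb θ₁) hsum)
  have hrest : 1 - b θ₀ * l θ₀ / ∑ θ, b θ * l θ =
      b θ₁ * (∑ τ ∈ univ.erase θ₀, l τ) / ∑ θ, b θ * l θ := by
    rw [eq_div_iff hS_pos.ne', sub_mul, one_mul, div_mul_cancel₀ _ hS_pos.ne', hS]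
    ring
  have hcard : (Fintype.card Θ : ℝ) - 1 ≠ 0 := by
    rw [← cast_card_univ_erase θ₀]
    exact_mod_cast (show (univ.erase θ₀).Nonempty from
      ⟨θ₁, mem_erase.2 ⟨h₁, mem_univ _⟩⟩).card_pos.ne'
  have hb₁ := (hb θ₁).ne'
  have hS_ne := hS_pos.ne'
  rw [hrest, complMean]
  field_simp

lemma eq_inv_one_add_mul_exp_neg_log {b : Θ → ℝ} (hb : ∀ θ, 0 < b θ) (hsum : ∑ θ, b θ = 1)
    {θ₀ θ₁ : Θ} (huni : ∀ τ ≠ θ₀, b τ = b θ₁) :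
    b θ₀ = (1 + ((Fintype.card Θ : ℝ) - 1) * exp (-log (b θ₀ / b θ₁)))⁻¹ := by
  have hsplit : b θ₀ + ((Fintype.card Θ : ℝ) - 1) * b θ₁ = 1 := by
    rw [← cast_card_univ_erase θ₀, ← nsmul_eq_mul, ← sum_const, ← hsum,
      ← add_sum_erase _ _ (mem_univ θ₀)]
    exact congrArg _ (sum_congr rfl fun τ hτ => (huni τ (ne_of_mem_erase hτ)).symm)
  have hb₀ := (hb θ₀).ne'
  have hinv : 1 + ((Fintype.card Θ : ℝ) - 1) * (b θ₁ / b θ₀) = (b θ₀)⁻¹ := by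
    field_simp
    linarith
  rw [exp_neg, exp_log (div_pos (hb θ₀) (hb θ₁)), inv_div, hinv, inv_inv]

variable {ι : Type*} [Fintype ι] {A : Matrix ι ι ℝ} {l μ ψ ψhat : ι → ℕ → Θ → ℝ} {θ₀ : Θ}

lemma belief_succ_eq_of_ne
    (hψhat : ∀ k i θ, ψhat k i θ =
      if θ = θ₀ then ψ k i θ else (1 - ψ k i θ₀) / ((Fintype.card Θ : ℝ) - 1))
    (hμ : ∀ k i θ, μ k (i + 1) θ =
      exp (∑ ℓ, A ℓ k * log (ψhat ℓ i θ)) / ∑ θ', exp (∑ ℓ, A ℓ k * log (ψhat ℓ i θ')))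
    {τ θ₁ : Θ} (hτ : τ ≠ θ₀) (h₁ : θ₁ ≠ θ₀) (k : ι) (i : ℕ) :
    μ k (i + 1) τ = μ k (i + 1) θ₁ := by
  simp only [hμ, hψhat, if_neg hτ, if_neg h₁]

lemma belief_succ_eq_inv_one_add_mul_exp_neg
    (hψhat : ∀ k i θ, ψhat k i θ =
      if θ = θ₀ then ψ k i θ else (1 - ψ k i θ₀) / ((Fintype.card Θ : ℝ) - 1))
    (hμ : ∀ k i θ, μ k (i + 1) θ =
      exp (∑ ℓ, A ℓ k * log (ψhat ℓ i θ)) / ∑ θ', exp (∑ ℓ, A ℓ k * log (ψhat ℓ i θ')))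
    {θ₁ : Θ} (h₁ : θ₁ ≠ θ₀) (k : ι) (n : ℕ) :
    μ k (n + 1) θ₀ =
      (1 + ((Fintype.card Θ : ℝ) - 1) * exp (-log (μ k (n + 1) θ₀ / μ k (n + 1) θ₁)))⁻¹ := by
  have : Nonempty Θ := ⟨θ₀⟩
  set x := fun θ => ∑ ℓ, A ℓ k * log (ψhat ℓ n θ)
  refine eq_inv_one_add_mul_exp_neg_log (fun θ => ?_) ?_
    fun τ hτ => belief_succ_eq_of_ne hψhat hμ hτ h₁ k n
  · rw [hμ]
    exact exp_div_sum_exp_pos x θ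
  · simp only [hμ]
    exact sum_exp_div_sum_exp x

theorem logOdds_succ_eq_vecMul (hl : ∀ k i θ, 0 < l k i θ)
    (hψ : ∀ k i θ, ψ k i θ = μ k i θ * l k i θ / ∑ θ', μ k i θ' * l k i θ')
    (hψhat : ∀ k i θ, ψhat k i θ =
      if θ = θ₀ then ψ k i θ else (1 - ψ k i θ₀) / ((Fintype.card Θ : ℝ) - 1))
    (hμ : ∀ k i θ, μ k (i + 1) θ =
      exp (∑ ℓ, A ℓ k * log (ψhat ℓ i θ)) / ∑ θ', exp (∑ ℓ, A ℓ k * log (ψhat ℓ i θ')))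
    {θ₁ : Θ} (h₁ : θ₁ ≠ θ₀) (n : ℕ) :
    (fun k => log (μ k (n + 2) θ₀ / μ k (n + 2) θ₁)) =
      ((fun k => log (μ k (n + 1) θ₀ / μ k (n + 1) θ₁)) +
        fun k => log (l k (n + 1) θ₀ / complMean (l k (n + 1)) θ₀)) ᵥ* A := by
  have : Nontrivial Θ := ⟨⟨θ₁, θ₀, h₁⟩⟩
  have hμ_pos : ∀ k θ, 0 < μ k (n + 1) θ := fun k θ => by
    rw [hμ]
    exact exp_div_sum_exp_pos (fun θ => ∑ ℓ, A ℓ k * log (ψhat ℓ n θ)) θ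
  have hodds : ∀ ℓ, ψhat ℓ (n + 1) θ₀ / ψhat ℓ (n + 1) θ₁ =
      μ ℓ (n + 1) θ₀ / μ ℓ (n + 1) θ₁ * (l ℓ (n + 1) θ₀ / complMean (l ℓ (n + 1)) θ₀) := by
    intro ℓ
    rw [hψhat, hψhat, if_pos rfl, if_neg h₁, hψ]
    exact bayes_partial_odds_eq (hμ_pos ℓ) (hl ℓ (n + 1)) h₁
      fun τ hτ => belief_succ_eq_of_ne hψhat hμ hτ h₁ ℓ n
  have hodds_pos : ∀ ℓ, 0 < ψhat ℓ (n + 1) θ₀ / ψhat ℓ (n + 1) θ₁ := fun ℓ => hodds ℓ ▸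
    mul_pos (div_pos (hμ_pos ℓ θ₀) (hμ_pos ℓ θ₁))
      (div_pos (hl ℓ (n + 1) θ₀) (complMean_pos (hl ℓ (n + 1)) θ₀))
  ext k
  have hlog := log_exp_div_sum_exp_div (fun θ => ∑ ℓ, A ℓ k * log (ψhat ℓ (n + 1) θ)) θ₀ θ₁
  beta_reduce at hlog
  rw [hμ, hμ, hlog, ← sum_sub_distrib]
  refine sum_congr rfl fun ℓ _ => ?_
  obtain ⟨h₀, h₁⟩ := div_ne_zero_iff.1 (hodds_pos ℓ).ne'
  rw [← mul_sub, ← log_div h₀ h₁, hodds, log_mul (div_pos (hμ_pos ℓ θ₀) (hμ_pos ℓ θ₁)).ne'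
    (div_pos (hl ℓ (n + 1) θ₀) (complMean_pos (hl ℓ (n + 1)) θ₀)).ne', mul_comm]
  rfl

end PartialSharing

section Sampling

variable {Ω X : Type*} [MeasurableSpace Ω] [MeasurableSpace X]

lemma integrable_withDensity_ofReal_iff {ν : Measure X} {ρ : X → ℝ} (hρ : Measurable ρ)
    (hρ0 : ∀ x, 0 ≤ ρ x) {g : X → ℝ} :
    Integrable g (ν.withDensity fun x => ENNReal.ofReal (ρ x)) ↔
      Integrable (fun x => g x * ρ x) ν := by
  rw [integrable_withDensity_iff hρ.ennreal_ofReal (ae_of_all _ fun _ => ENNReal.ofReal_lt_top)]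
  simp [ENNReal.toReal_ofReal, hρ0]

lemma integral_withDensity_ofReal {ν : Measure X} {ρ : X → ℝ} (hρ : Measurable ρ)
    (hρ0 : ∀ x, 0 ≤ ρ x) (g : X → ℝ) :
    ∫ x, g x ∂(ν.withDensity fun x => ENNReal.ofReal (ρ x)) = ∫ x, g x * ρ x ∂ν := by
  rw [integral_withDensity_eq_integral_toReal_smul hρ.ennreal_ofReal
    (ae_of_all _ fun _ => ENNReal.ofReal_lt_top)]
  simp [ENNReal.toReal_ofReal, hρ0, mul_comm]

theorem ae_tendsto_sum_range_comp_div {P : Measure Ω} {Y : ℕ → Ω → X}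
    (hY : ∀ j, Measurable (Y j)) {μX : Measure X} (hlaw : ∀ j, P.map (Y j) = μX)
    (hindep : Pairwise fun j j' => IndepFun (Y j) (Y j') P) {g : X → ℝ} (hg : Measurable g)
    (hgi : Integrable g μX) :
    ∀ᵐ ω ∂P, Tendsto (fun n : ℕ => (∑ j ∈ range n, g (Y j ω)) / n) atTop
      (𝓝 (∫ x, g x ∂μX)) := by
  have hident : ∀ j, IdentDistrib (Y j) (Y 0) P P := fun j =>
    ⟨(hY j).aemeasurable, (hY 0).aemeasurable, by rw [hlaw, hlaw]⟩
  have hint : Integrable (g ∘ Y 0) P := by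
    rw [← hlaw 0] at hgi
    exact hgi.comp_measurable (hY 0)
  have hmean : ∫ ω, g (Y 0 ω) ∂P = ∫ x, g x ∂μX := by
    rw [← hlaw 0, integral_map (hY 0).aemeasurable hg.aestronglyMeasurable]
  simpa [hmean] using strong_law_ae_real (fun j => g ∘ Y j) hint
    (fun j j' h => (hindep h).comp hg hg) (fun j => (hident j).comp hg)

theorem ae_tendsto_sum_range_comp_div_of_withDensity {P : Measure Ω} {ν : Measure X}
    {ρ : X → ℝ} (hρ : Measurable ρ) (hρ0 : ∀ x, 0 ≤ ρ x) {Y : ℕ → Ω → X}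
    (hY : ∀ j, Measurable (Y j))
    (hlaw : ∀ j, P.map (Y j) = ν.withDensity fun x => ENNReal.ofReal (ρ x))
    (hindep : Pairwise fun j j' => IndepFun (Y j) (Y j') P) {g : X → ℝ} (hg : Measurable g)
    (hgi : Integrable (fun x => g x * ρ x) ν) :
    ∀ᵐ ω ∂P, Tendsto (fun n : ℕ => (∑ j ∈ range n, g (Y j ω)) / n) atTop
      (𝓝 (∫ x, g x * ρ x ∂ν)) := by
  rw [← integral_withDensity_ofReal hρ hρ0]
  exact ae_tendsto_sum_range_comp_div hY hlaw hindep hg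
    ((integrable_withDensity_ofReal_iff hρ hρ0).2 hgi)

lemma integrable_log_div_complMean_mul {Θ : Type*} [Fintype Θ] [DecidableEq Θ] [Nontrivial Θ]
    {ν : Measure X} {L : Θ → X → ℝ} (hL_meas : ∀ θ, Measurable (L θ))
    (hL_pos : ∀ θ x, 0 < L θ x) {θ : Θ}
    (hint : ∀ τ, Integrable (fun x => log (L θ x / L τ x) * L θ x) ν) :
    Integrable (fun x => log (L θ x / complMean (fun τ => L τ x) θ) * L θ x) ν := by
  refine Integrable.mono' (integrable_finsetSum (univ.erase θ) fun τ _ => (hint τ).abs) ?_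
    (ae_of_all _ fun x => ?_)
  · unfold complMean
    fun_prop
  · simp only [Real.norm_eq_abs, abs_mul, abs_of_pos (hL_pos θ x), ← sum_mul]
    exact mul_le_mul_of_nonneg_right (abs_log_div_complMean_le (fun τ => hL_pos τ x) θ)
      (hL_pos θ x).le

end Sampling

lemma tendsto_inv_one_add_mul_exp_neg {α : Type*} {l : Filter α} {x : α → ℝ}
    (hx : Tendsto x l atTop) (c : ℝ) : Tendsto (fun a => (1 + c * exp (-x a))⁻¹) l (𝓝 1) := by
  have := ((tendsto_exp_neg_atTop_nhds_zero.comp hx).const_mul c).const_add 1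
  rw [mul_zero, add_zero] at this
  simpa using this.inv₀ one_ne_zero

theorem partial_approach_truth_learning_general
    {N : ℕ}
    {Θ : Type*} [Fintype Θ] [DecidableEq Θ] (hH : 2 ≤ Fintype.card Θ)
    -- the combination matrix: left-stochastic (columns sum to one) and primitive
    (A : Matrix (Fin N) (Fin N) ℝ)
    (hA_nonneg : ∀ ℓ k, 0 ≤ A ℓ k)
    (hA_stoch : ∀ k, ∑ ℓ, A ℓ k = 1)
    (hA_prim : ∃ m : ℕ, ∀ ℓ k, 0 < (A ^ m) ℓ k)
    -- the observation space, dominating measure and positive likelihood densities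
    {X : Type*} [MeasurableSpace X] (ν : Measure X)
    (L : Θ → X → ℝ)
    (hL_meas : ∀ θ, Measurable (L θ))
    (hL_pos : ∀ θ x, 0 < L θ x)
    -- the true hypothesis and the transmitted hypothesis
    (θ0 θTX : Θ) (hTX : θTX = θ0)
    -- the probability space and the observations: measurable, with the law
    -- having density `L θ0` w.r.t. `ν`, i.i.d. across time and independent across agents
    {Ω : Type*} [MeasurableSpace Ω] (P : Measure Ω)
    (ξ : Fin N → ℕ → Ω → X)
    (hξ_meas : ∀ k i, Measurable (ξ k i))
    (hξ_dist : ∀ k i, P.map (ξ k i) = ν.withDensity (fun x => ENNReal.ofReal (L θ0 x)))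
    (hξ_indep : iIndepFun (m := fun _ : Fin N × ℕ => (inferInstance : MeasurableSpace X))
      (fun p : Fin N × ℕ => ξ p.1 p.2) P)
    -- Assumption 2: integrable log-likelihood ratios (w.r.t. the law of the data)
    (hint : ∀ θ θ' : Θ, Integrable (fun x => Real.log (L θ x / L θ' x) * L θ0 x) ν)
    -- the beliefs, intermediate beliefs and modified (partially shared) beliefs
    (μ ψ ψhat : Fin N → ℕ → Ω → Θ → ℝ)
    -- the Bayesian update (Eq. (2)); `ψ k i` is the intermediate belief at time `i+1`
    (hψ : ∀ k i ω θ, ψ k i ω θ =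
      μ k i ω θ * L θ (ξ k i ω) / ∑ θ', μ k i ω θ' * L θ' (ξ k i ω))
    -- the modified beliefs (Eq. (3))
    (hψhat : ∀ k i ω θ, ψhat k i ω θ =
      if θ = θTX then ψ k i ω θ
      else (1 - ψ k i ω θTX) / ((Fintype.card Θ : ℝ) - 1))
    -- the log-linear combination step (Eq. (4))
    (hμ : ∀ k i ω θ, μ k (i + 1) ω θ =
      Real.exp (∑ ℓ, A ℓ k * Real.log (ψhat ℓ i ω θ)) /
        ∑ θ', Real.exp (∑ ℓ, A ℓ k * Real.log (ψhat ℓ i ω θ')))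
    -- the condition `D_KL[L(θ0) ‖ P(θ0ᶜ)] > 0`
    (hD : 0 < ∫ x, Real.log (L θ0 x /
        (((Fintype.card Θ : ℝ) - 1)⁻¹ * ∑ τ ∈ Finset.univ.erase θ0, L τ x)) * L θ0 x ∂ν) :
    -- conclusion: almost-sure convergence of the belief in the true hypothesis to one
    ∀ k, ∀ᵐ ω ∂P, Tendsto (fun i => μ k i ω θ0) atTop (nhds 1) := by
  intro k
  subst hTX
  have : Nonempty (Fin N) := ⟨k⟩
  have : Nontrivial Θ := Fintype.one_lt_card_iff_nontrivial.1 hH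
  obtain ⟨θ₁, h₁⟩ := exists_ne θTX
  obtain ⟨u, hu_sum, hu⟩ :=
    Matrix.exists_tendsto_pow_apply (mem_colStochastic_iff_sum.2 ⟨hA_nonneg, hA_stoch⟩) hA_prim
  set f : X → ℝ := fun x => log (L θTX x / complMean (fun τ => L τ x) θTX)
  have hf : Measurable f := by unfold f complMean; fun_prop
  have hf_int := integrable_log_div_complMean_mul hL_meas hL_pos (hint θTX)
  have hslln : ∀ g : X → ℝ, Measurable g → Integrable (fun x => g x * L θTX x) ν → ∀ ℓ,
      ∀ᵐ ω ∂P, Tendsto (fun n : ℕ => (∑ j ∈ range n, g (ξ ℓ (j + 1) ω)) / n) atTop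
        (𝓝 (∫ x, g x * L θTX x ∂ν)) := fun g hg hgi ℓ =>
    ae_tendsto_sum_range_comp_div_of_withDensity (hL_meas θTX) (fun x => (hL_pos θTX x).le)
      (fun j => hξ_meas ℓ (j + 1)) (fun j => hξ_dist ℓ (j + 1))
      (fun j j' h => hξ_indep.indepFun (i := (ℓ, j + 1)) (j := (ℓ, j' + 1)) (by simpa using h))
      hg hgi
  filter_upwards [ae_all_iff.2 fun ℓ => (hslln f hf hf_int ℓ).and (hslln _ hf.abs
    (by simpa [abs_mul, abs_of_pos (hL_pos θTX _)] using hf_int.abs) ℓ)] with ω hω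
  have hgrowth := Matrix.tendsto_apply_div_of_eq_vecMul hu
    (x := fun n k => log (μ k (n + 1) ω θTX / μ k (n + 1) ω θ₁))
    (z := fun n ℓ => f (ξ ℓ (n + 1) ω))
    (logOdds_succ_eq_vecMul (l := fun k i θ => L θ (ξ k i ω)) (fun _ _ _ => hL_pos _ _)
      (fun k i => hψ k i ω) (fun k i => hψhat k i ω) (fun k i => hμ k i ω) h₁)
    (fun ℓ => (hω ℓ).1) (fun ℓ => (hω ℓ).2) k
  rw [← sum_mul, hu_sum, one_mul] at hgrowth
  have hlim := tendsto_inv_one_add_mul_exp_neg (tendsto_natCast_atTop_atTop.num hD hgrowth)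
    ((Fintype.card Θ : ℝ) - 1)
  refine (tendsto_add_atTop_iff_nat 1).1 (hlim.congr fun n => ?_)
  exact (belief_succ_eq_inv_one_add_mul_exp_neg (μ := fun k i => μ k i ω)
    (fun k i => hψhat k i ω) (fun k i => hμ k i ω) h₁ k n).symm

/-- Theorem 1, first part: truth learning in the partial approach.
Under positive initial beliefs (Assumption 1) and integrable log-likelihood ratios
(Assumption 2), in the partial information-sharing approach with transmitted hypothesis
`θTX = θ0`, if `D_KL[L(θ0) ‖ P(θ0ᶜ)] > 0`, where `P(·|θ0ᶜ)` is the uniform average of the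
likelihoods of the non-true hypotheses, then for every agent `k` the belief in the true
hypothesis converges to one almost surely. -/
theorem partial_approach_truth_learning
    {N : ℕ} (hN : 0 < N)
    {Θ : Type*} [Fintype Θ] [DecidableEq Θ] (hH : 2 ≤ Fintype.card Θ)
    -- the combination matrix: left-stochastic (columns sum to one) and primitive
    (A : Matrix (Fin N) (Fin N) ℝ)
    (hA_nonneg : ∀ ℓ k, 0 ≤ A ℓ k)
    (hA_stoch : ∀ k, ∑ ℓ, A ℓ k = 1)
    (hA_prim : ∃ m : ℕ, ∀ ℓ k, 0 < (A ^ m) ℓ k)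
    -- the observation space, dominating measure and positive likelihood densities
    {X : Type*} [MeasurableSpace X] (ν : Measure X) [SigmaFinite ν]
    (L : Θ → X → ℝ)
    (hL_meas : ∀ θ, Measurable (L θ))
    (hL_pos : ∀ θ x, 0 < L θ x)
    (hL_prob : ∀ θ, ∫ x, L θ x ∂ν = 1)
    -- the true hypothesis and the transmitted hypothesis
    (θ0 θTX : Θ) (hTX : θTX = θ0)
    -- the probability space and the observations: measurable, with the law
    -- having density `L θ0` w.r.t. `ν`, i.i.d. across time and independent across agents
    {Ω : Type*} [MeasurableSpace Ω] (P : Measure Ω) [IsProbabilityMeasure P]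
    (ξ : Fin N → ℕ → Ω → X)
    (hξ_meas : ∀ k i, Measurable (ξ k i))
    (hξ_dist : ∀ k i, P.map (ξ k i) = ν.withDensity (fun x => ENNReal.ofReal (L θ0 x)))
    (hξ_indep : iIndepFun (m := fun _ : Fin N × ℕ => (inferInstance : MeasurableSpace X))
      (fun p : Fin N × ℕ => ξ p.1 p.2) P)
    -- Assumption 2: integrable log-likelihood ratios (w.r.t. the law of the data)
    (hint : ∀ θ θ' : Θ, Integrable (fun x => Real.log (L θ x / L θ' x) * L θ0 x) ν)
    -- the beliefs, intermediate beliefs and modified (partially shared) beliefs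
    (μ ψ ψhat : Fin N → ℕ → Ω → Θ → ℝ)
    -- Assumption 1: positive initial beliefs
    (hμ0_pos : ∀ k ω θ, 0 < μ k 0 ω θ)
    (hμ0_sum : ∀ k ω, ∑ θ, μ k 0 ω θ = 1)
    -- the Bayesian update (Eq. (2)); `ψ k i` is the intermediate belief at time `i+1`
    (hψ : ∀ k i ω θ, ψ k i ω θ =
      μ k i ω θ * L θ (ξ k i ω) / ∑ θ', μ k i ω θ' * L θ' (ξ k i ω))
    -- the modified beliefs (Eq. (3))
    (hψhat : ∀ k i ω θ, ψhat k i ω θ =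
      if θ = θTX then ψ k i ω θ
      else (1 - ψ k i ω θTX) / ((Fintype.card Θ : ℝ) - 1))
    -- the log-linear combination step (Eq. (4))
    (hμ : ∀ k i ω θ, μ k (i + 1) ω θ =
      Real.exp (∑ ℓ, A ℓ k * Real.log (ψhat ℓ i ω θ)) /
        ∑ θ', Real.exp (∑ ℓ, A ℓ k * Real.log (ψhat ℓ i ω θ')))
    -- the condition `D_KL[L(θ0) ‖ P(θ0ᶜ)] > 0`
    (hD : 0 < ∫ x, Real.log (L θ0 x /
        (((Fintype.card Θ : ℝ) - 1)⁻¹ * ∑ τ ∈ Finset.univ.erase θ0, L τ x)) * L θ0 x ∂ν) :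
    -- conclusion: almost-sure convergence of the belief in the true hypothesis to one
    ∀ k, ∀ᵐ ω ∂P, Tendsto (fun i => μ k i ω θ0) atTop (nhds 1) :=
  partial_approach_truth_learning_general hH A hA_nonneg hA_stoch hA_prim ν L hL_meas hL_pos θ0 θTX
    hTX P ξ hξ_meas hξ_dist hξ_indep hint μ ψ ψhat hψ hψhat hμ hD
end

section
/- (Log-belief-ratio recursion, Eq. (10)) In the partial approach, at any time i ≥ 1 such that the beliefs at time i−1 satisfy μ_{ℓ,i−1}(τ) = μ_{ℓ,i−1}(τ′) for every agent ℓ and every pair τ, τ′ ≠ θ_TX, it holds for every agent k and every θ ≠ θ_TX that log(μ_{k,i}(θ)/μ_{k,i}(θ_TX)) = Σ_{ℓ=1}^N a_{ℓk} [ log(μ_{ℓ,i−1}(θ)/μ_{ℓ,i−1}(θ_TX)) + log(P(ξ_{ℓ,i}|θ_TX^c)/L(ξ_{ℓ,i}|θ_TX)) ], where P(ξ|θ_TX^c) ≜ (1/(H−1)) Σ_{τ≠θ_TX} L(ξ|τ). -/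
/-!
Geometric pooling followed by normalisation makes the log-ratio of two new beliefs the
`A`-weighted sum of the log-ratios of the pooled beliefs, since the normaliser cancels. For one
agent, when the previous belief is flat off `θTX`, the Bayes mass `1 - ψ(θTX)` left for the
non-transmitted hypotheses is `μ(θ) ∑_{τ ≠ θTX} L(ξ|τ)` over the common normaliser, so the ratio
of the flattened value to `ψ(θTX)` splits into the prior ratio times the likelihood ratio
`P(ξ|θTXᶜ) / L(ξ|θTX)`.
-/

open Finset Real

theorem log_div_exp_div_sum_exp {ι : Type*} [Fintype ι] (v : ι → ℝ) (i j : ι) :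
    log ((exp (v i) / ∑ k, exp (v k)) / (exp (v j) / ∑ k, exp (v k))) = v i - v j := by
  have hZ : 0 < ∑ k, exp (v k) := sum_pos (fun k _ => exp_pos (v k)) ⟨i, mem_univ i⟩
  rw [div_div_div_cancel_right₀ hZ.ne', ← exp_sub, log_exp]

section Bayes

variable {Θ : Type*} [Fintype Θ] [DecidableEq Θ]

theorem one_sub_bayes_eq_of_eq_off (μ p : Θ → ℝ) {θTX θ : Θ}
    (hμ : ∀ τ, τ ≠ θTX → μ τ = μ θ) (hZ : ∑ τ, μ τ * p τ ≠ 0) :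
    1 - μ θTX * p θTX / ∑ τ, μ τ * p τ =
      μ θ * (∑ τ ∈ univ.erase θTX, p τ) / ∑ τ, μ τ * p τ := by
  rw [eq_div_iff hZ, sub_mul, one_mul, div_mul_cancel₀ _ hZ, ← sum_erase_eq_sub (mem_univ _),
    mul_sum]
  exact sum_congr rfl fun τ hτ => by rw [hμ τ (ne_of_mem_erase hτ)]

theorem log_partial_bayes_sub_log_bayes (μ p : Θ → ℝ) (hμ : ∀ τ, 0 < μ τ) (hp : ∀ τ, 0 < p τ)
    {θTX θ : Θ} (hθ : θ ≠ θTX) (hμ_eq : ∀ τ, τ ≠ θTX → μ τ = μ θ) :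
    log ((1 - μ θTX * p θTX / ∑ τ, μ τ * p τ) / ((Fintype.card Θ : ℝ) - 1)) -
        log (μ θTX * p θTX / ∑ τ, μ τ * p τ) =
      log (μ θ / μ θTX) +
        log ((((Fintype.card Θ : ℝ) - 1)⁻¹ * ∑ τ ∈ univ.erase θTX, p τ) / p θTX) := by
  have hZ : 0 < ∑ τ, μ τ * p τ := sum_pos (fun τ _ => mul_pos (hμ τ) (hp τ)) ⟨θ, mem_univ θ⟩
  have hT : 0 < ∑ τ ∈ univ.erase θTX, p τ := sum_pos (fun τ _ => hp τ) ⟨θ, mem_erase.2 ⟨hθ, mem_univ θ⟩⟩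
  have hH : (0 : ℝ) < (Fintype.card Θ : ℝ) - 1 := by
    have : 1 < Fintype.card Θ := Fintype.one_lt_card_iff.2 ⟨θ, θTX, hθ⟩
    rw [sub_pos]
    exact_mod_cast this
  have hθTX := hμ θTX
  have hpTX := hp θTX
  have hμθ := hμ θ
  rw [one_sub_bayes_eq_of_eq_off μ p hμ_eq hZ.ne', ← log_div (by positivity) (by positivity),
    ← log_mul (by positivity) (by positivity)]
  congr 1
  field_simp

end Bayes

theorem partial_approach_log_ratio_recursion_general
    {N : ℕ}
    {Θ : Type*} [Fintype Θ] [DecidableEq Θ]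
    (A : Matrix (Fin N) (Fin N) ℝ)
    {X : Type*} (L : Θ → X → ℝ) (hL_pos : ∀ θ x, 0 < L θ x)
    -- the observations received by the agents at the current time instant
    (ξ : Fin N → X)
    (θTX : Θ)
    -- previous beliefs, intermediate beliefs, modified beliefs and new beliefs
    (μprev : Fin N → Θ → ℝ) (ψ ψhat μnew : Fin N → Θ → ℝ)
    (hμprev_pos : ∀ ℓ θ, 0 < μprev ℓ θ)
    -- the previous beliefs agree on all non-transmitted hypotheses
    (hμprev_eq : ∀ ℓ, ∀ τ τ' : Θ, τ ≠ θTX → τ' ≠ θTX → μprev ℓ τ = μprev ℓ τ')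
    (hψ : ∀ ℓ θ, ψ ℓ θ = μprev ℓ θ * L θ (ξ ℓ) / ∑ θ', μprev ℓ θ' * L θ' (ξ ℓ))
    (hψhat : ∀ ℓ θ, ψhat ℓ θ =
      if θ = θTX then ψ ℓ θ else (1 - ψ ℓ θTX) / ((Fintype.card Θ : ℝ) - 1))
    (hμnew : ∀ k θ, μnew k θ =
      Real.exp (∑ ℓ, A ℓ k * Real.log (ψhat ℓ θ)) /
        ∑ θ', Real.exp (∑ ℓ, A ℓ k * Real.log (ψhat ℓ θ'))) :
    ∀ k, ∀ θ, θ ≠ θTX →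
      Real.log (μnew k θ / μnew k θTX) =
        ∑ ℓ, A ℓ k * (Real.log (μprev ℓ θ / μprev ℓ θTX) +
          Real.log ((((Fintype.card Θ : ℝ) - 1)⁻¹ * ∑ τ ∈ Finset.univ.erase θTX, L τ (ξ ℓ)) /
            L θTX (ξ ℓ))) := by
  intro k θ hθ
  have h_agent : ∀ ℓ, log (ψhat ℓ θ) - log (ψhat ℓ θTX) =
      log (μprev ℓ θ / μprev ℓ θTX) +
        log ((((Fintype.card Θ : ℝ) - 1)⁻¹ * ∑ τ ∈ univ.erase θTX, L τ (ξ ℓ)) / L θTX (ξ ℓ)) := by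
    intro ℓ
    rw [hψhat, hψhat, if_neg hθ, if_pos rfl, hψ]
    exact log_partial_bayes_sub_log_bayes (μprev ℓ) (L · (ξ ℓ)) (hμprev_pos ℓ) (hL_pos · _) hθ
      fun τ hτ => hμprev_eq ℓ τ θ hτ hθ
  rw [hμnew, hμnew, log_div_exp_div_sum_exp (fun θ' => ∑ ℓ, A ℓ k * log (ψhat ℓ θ')),
    ← sum_sub_distrib]
  exact sum_congr rfl fun ℓ _ => by rw [← mul_sub, h_agent]

/-- Eq. (10): log-belief-ratio recursion in the partial approach.
In the partial approach, at any time step where the previous beliefs agree on all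
non-transmitted hypotheses, for every agent `k` and every `θ ≠ θTX`:
`log(μnew_k(θ)/μnew_k(θTX)) = ∑_ℓ a_(ℓk) [log(μprev_ℓ(θ)/μprev_ℓ(θTX))
  + log(P(ξ_ℓ|θTXᶜ)/L(ξ_ℓ|θTX))]`, where `P(ξ|θTXᶜ) = (1/(H−1)) ∑_(τ≠θTX) L(ξ|τ)`.
This is a deterministic identity holding for every realization of the observations. -/
theorem partial_approach_log_ratio_recursion
    {N : ℕ} (hN : 0 < N)
    {Θ : Type*} [Fintype Θ] [DecidableEq Θ] (hH : 2 ≤ Fintype.card Θ)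
    (A : Matrix (Fin N) (Fin N) ℝ)
    (hA_nonneg : ∀ ℓ k, 0 ≤ A ℓ k)
    (hA_stoch : ∀ k, ∑ ℓ, A ℓ k = 1)
    {X : Type*} (L : Θ → X → ℝ) (hL_pos : ∀ θ x, 0 < L θ x)
    -- the observations received by the agents at the current time instant
    (ξ : Fin N → X)
    (θTX : Θ)
    -- previous beliefs, intermediate beliefs, modified beliefs and new beliefs
    (μprev : Fin N → Θ → ℝ) (ψ ψhat μnew : Fin N → Θ → ℝ)
    (hμprev_pos : ∀ ℓ θ, 0 < μprev ℓ θ)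
    (hμprev_sum : ∀ ℓ, ∑ θ, μprev ℓ θ = 1)
    -- the previous beliefs agree on all non-transmitted hypotheses
    (hμprev_eq : ∀ ℓ, ∀ τ τ' : Θ, τ ≠ θTX → τ' ≠ θTX → μprev ℓ τ = μprev ℓ τ')
    (hψ : ∀ ℓ θ, ψ ℓ θ = μprev ℓ θ * L θ (ξ ℓ) / ∑ θ', μprev ℓ θ' * L θ' (ξ ℓ))
    (hψhat : ∀ ℓ θ, ψhat ℓ θ =
      if θ = θTX then ψ ℓ θ else (1 - ψ ℓ θTX) / ((Fintype.card Θ : ℝ) - 1))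
    (hμnew : ∀ k θ, μnew k θ =
      Real.exp (∑ ℓ, A ℓ k * Real.log (ψhat ℓ θ)) /
        ∑ θ', Real.exp (∑ ℓ, A ℓ k * Real.log (ψhat ℓ θ'))) :
    ∀ k, ∀ θ, θ ≠ θTX →
      Real.log (μnew k θ / μnew k θTX) =
        ∑ ℓ, A ℓ k * (Real.log (μprev ℓ θ / μprev ℓ θTX) +
          Real.log ((((Fintype.card Θ : ℝ) - 1)⁻¹ * ∑ τ ∈ Finset.univ.erase θTX, L τ (ξ ℓ)) /
            L θTX (ξ ℓ))) :=
  partial_approach_log_ratio_recursion_general A L hL_pos ξ θTX μprev ψ ψhat μnew hμprev_pos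
    hμprev_eq hψ hψhat hμnew
end

section
/- (Self-aware recursion for non-transmitted hypotheses, Eq. (22)) In the self-aware partial approach, for every agent k, every time i ≥ 1, and every pair θ, θ′ with θ ≠ θ_TX, θ′ ≠ θ_TX, it holds that log(μ_{k,i}(θ)/μ_{k,i}(θ′)) = a_{kk} log(μ_{k,i−1}(θ)/μ_{k,i−1}(θ′)) + a_{kk} log(L(ξ_{k,i}|θ)/L(ξ_{k,i}|θ′)). -/
/-! The modified beliefs `ψhat ℓ` take one common value on all non-transmitted hypotheses, so the
neighbours' terms cancel from the exponent difference of the combination step, leaving `a_kk` times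
the log-ratio of the Bayesian update; the normalizers of the softmax and of Bayes' rule cancel. -/

open Finset Real

theorem log_exp_div_div_exp_div {x y Z : ℝ} (hZ : Z ≠ 0) :
    log (exp x / Z / (exp y / Z)) = x - y := by
  rw [div_div_div_cancel_right₀ hZ, ← exp_sub, log_exp]

theorem log_sub_log_bayes {ι : Type*} [Fintype ι] {p q : ι → ℝ} (hp : ∀ i, 0 < p i)
    (hq : ∀ i, 0 < q i) (i j : ι) :
    log (p i * q i / ∑ k, p k * q k) - log (p j * q j / ∑ k, p k * q k) =
      log (p i / p j) + log (q i / q j) := by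
  have hS : 0 < ∑ k, p k * q k := sum_pos (fun k _ => mul_pos (hp k) (hq k)) ⟨i, mem_univ i⟩
  rw [← log_div (div_pos (mul_pos (hp i) (hq i)) hS).ne' (div_pos (mul_pos (hp j) (hq j)) hS).ne',
    div_div_div_cancel_right₀ hS.ne', mul_div_mul_comm,
    log_mul (div_pos (hp i) (hp j)).ne' (div_pos (hq i) (hq j)).ne']

theorem self_aware_log_ratio_recursion_general
    {N : ℕ}
    {Θ : Type*} [Fintype Θ] [DecidableEq Θ]
    (A : Matrix (Fin N) (Fin N) ℝ)
    {X : Type*} (L : Θ → X → ℝ) (hL_pos : ∀ θ x, 0 < L θ x)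
    -- the observations received by the agents at the current time instant
    (ξ : Fin N → X)
    (θTX : Θ)
    -- previous beliefs, intermediate beliefs, modified beliefs and new beliefs
    (μprev : Fin N → Θ → ℝ) (ψ ψhat μnew : Fin N → Θ → ℝ)
    (hμprev_pos : ∀ ℓ θ, 0 < μprev ℓ θ)
    (hψ : ∀ ℓ θ, ψ ℓ θ = μprev ℓ θ * L θ (ξ ℓ) / ∑ θ', μprev ℓ θ' * L θ' (ξ ℓ))
    (hψhat : ∀ ℓ θ, ψhat ℓ θ =
      if θ = θTX then ψ ℓ θ else (1 - ψ ℓ θTX) / ((Fintype.card Θ : ℝ) - 1))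
    -- the self-aware combination step (Eq. (5))
    (hμnew : ∀ k θ, μnew k θ =
      Real.exp (A k k * Real.log (ψ k θ) +
          ∑ ℓ ∈ Finset.univ.erase k, A ℓ k * Real.log (ψhat ℓ θ)) /
        ∑ θ', Real.exp (A k k * Real.log (ψ k θ') +
          ∑ ℓ ∈ Finset.univ.erase k, A ℓ k * Real.log (ψhat ℓ θ'))) :
    ∀ k, ∀ θ θ' : Θ, θ ≠ θTX → θ' ≠ θTX →
      Real.log (μnew k θ / μnew k θ') =
        A k k * Real.log (μprev k θ / μprev k θ') +
          A k k * Real.log (L θ (ξ k) / L θ' (ξ k)) := by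
  intro k θ θ' hθ hθ'
  have hψhat_eq : ∀ ℓ, ψhat ℓ θ = ψhat ℓ θ' := fun ℓ => by rw [hψhat, hψhat, if_neg hθ, if_neg hθ']
  rw [hμnew, hμnew,
    log_exp_div_div_exp_div (sum_pos (fun t _ => exp_pos _) ⟨θ, mem_univ θ⟩).ne']
  simp only [hψhat_eq, add_sub_add_right_eq_sub]
  rw [← mul_sub, ← mul_add, hψ, hψ]
  exact congrArg _ (log_sub_log_bayes (hμprev_pos k) (fun t => hL_pos t (ξ k)) θ θ')

/-- Eq. (22): self-aware recursion for non-transmitted hypotheses.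
In the self-aware partial approach, for every agent `k` and every pair `θ, θ' ≠ θTX`:
`log(μnew_k(θ)/μnew_k(θ')) = a_(kk) log(μprev_k(θ)/μprev_k(θ'))
  + a_(kk) log(L(ξ_k|θ)/L(ξ_k|θ'))`.
This is a deterministic identity holding for every realization of the observations. -/
theorem self_aware_log_ratio_recursion
    {N : ℕ} (hN : 0 < N)
    {Θ : Type*} [Fintype Θ] [DecidableEq Θ] (hH : 2 ≤ Fintype.card Θ)
    (A : Matrix (Fin N) (Fin N) ℝ)
    (hA_nonneg : ∀ ℓ k, 0 ≤ A ℓ k)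
    (hA_stoch : ∀ k, ∑ ℓ, A ℓ k = 1)
    {X : Type*} (L : Θ → X → ℝ) (hL_pos : ∀ θ x, 0 < L θ x)
    -- the observations received by the agents at the current time instant
    (ξ : Fin N → X)
    (θTX : Θ)
    -- previous beliefs, intermediate beliefs, modified beliefs and new beliefs
    (μprev : Fin N → Θ → ℝ) (ψ ψhat μnew : Fin N → Θ → ℝ)
    (hμprev_pos : ∀ ℓ θ, 0 < μprev ℓ θ)
    (hμprev_sum : ∀ ℓ, ∑ θ, μprev ℓ θ = 1)
    (hψ : ∀ ℓ θ, ψ ℓ θ = μprev ℓ θ * L θ (ξ ℓ) / ∑ θ', μprev ℓ θ' * L θ' (ξ ℓ))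
    (hψhat : ∀ ℓ θ, ψhat ℓ θ =
      if θ = θTX then ψ ℓ θ else (1 - ψ ℓ θTX) / ((Fintype.card Θ : ℝ) - 1))
    -- the self-aware combination step (Eq. (5))
    (hμnew : ∀ k θ, μnew k θ =
      Real.exp (A k k * Real.log (ψ k θ) +
          ∑ ℓ ∈ Finset.univ.erase k, A ℓ k * Real.log (ψhat ℓ θ)) /
        ∑ θ', Real.exp (A k k * Real.log (ψ k θ') +
          ∑ ℓ ∈ Finset.univ.erase k, A ℓ k * Real.log (ψhat ℓ θ'))) :
    ∀ k, ∀ θ θ' : Θ, θ ≠ θTX → θ' ≠ θTX →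
      Real.log (μnew k θ / μnew k θ') =
        A k k * Real.log (μprev k θ / μprev k θ') +
          A k k * Real.log (L θ (ξ k) / L θ' (ξ k)) :=
  self_aware_log_ratio_recursion_general A L hL_pos ξ θTX μprev ψ ψhat μnew hμprev_pos hψ hψhat
    hμnew
end

section
/- (Network time-averaging limit) Let A = (a_{ℓk}) be an N×N left-stochastic primitive matrix with Perron eigenvector v (Av = v, 1ᵀv = 1, v ≻ 0). Let (X_{ℓ,i})_{ℓ=1,…,N; i≥1} be real random variables, independent across i, such that for each ℓ the sequence (X_{ℓ,i})_{i≥1} is identically distributed and integrable with mean m_ℓ. Define y_{k,0} arbitrarily (deterministic reals) and y_{k,i} = Σ_{ℓ=1}^N a_{ℓk}(y_{ℓ,i−1} + X_{ℓ,i}) for i ≥ 1. Then for every k, lim_{i→∞} y_{k,i}/i = Σ_{ℓ=1}^N v_ℓ m_ℓ almost surely. -/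
/-!
In row-vector form the recursion is `y (i+1) = (y i + X (i+1)) ᵥ* A`, so
`y i = y 0 ᵥ* A ^ i + ∑_{j<i} X (j+1) ᵥ* A ^ (i-j)`. Because `A *ᵥ v = v` and the columns of `A`
sum to one, `u ᵥ* A ^ n - (v ⬝ᵥ u) • 1` is the centred vector `u - (v ⬝ᵥ u) • 1` pushed through
`A ^ n`. A positive power `A ^ M` dominates `c • v` in every column, and Doeblin's argument then
contracts centred vectors by `1 - c` every `M` steps. Hence `y i k` equals
`v ⬝ᵥ y 0 + ∑_{j<i} v ⬝ᵥ X (j+1)` up to the convolution of a summable kernel with `‖X j‖`, which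
is `o(i)` since `X j / j → 0`; the strong law of large numbers, coordinatewise, finishes.
-/

open Filter Finset Matrix Topology MeasureTheory ProbabilityTheory

lemma summable_pow_div {r : ℝ} (hr₀ : 0 ≤ r) (hr₁ : r < 1) (M : ℕ) [NeZero M] :
    Summable fun n : ℕ => r ^ (n / M) := by
  have h := (summable_geometric_of_lt_one hr₀ hr₁).mul_of_nonneg
    (Summable.of_finite (f := fun _ : Fin M => (1 : ℝ))) (fun n => pow_nonneg hr₀ n)
    (fun _ => zero_le_one)
  simpa [Function.comp_def] using (Nat.divModEquiv M).summable_iff.2 h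

lemma tendsto_sum_range_mul_sub_of_summable {κ b : ℕ → ℝ} (hκ : Summable κ)
    (hb : Tendsto b atTop (𝓝 0)) :
    Tendsto (fun n => ∑ j ∈ range n, κ (n - j) * b j) atTop (𝓝 0) := by
  obtain ⟨B, hB⟩ := hb.norm.bddAbove_range
  have hB₀ : 0 ≤ B := (norm_nonneg _).trans (hB ⟨0, rfl⟩)
  have hreflect : ∀ n, ∑ j ∈ range n, κ (n - j) * b j
      = ∑' t, if t < n then κ (t + 1) * b (n - 1 - t) else 0 := by
    intro n
    rw [tsum_eq_sum (s := range n) fun t ht => if_neg (by simpa using ht),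
      ← sum_range_reflect]
    refine sum_congr rfl fun t ht => ?_
    have ht : t < n := mem_range.1 ht
    rw [if_pos ht, show n - (n - 1 - t) = t + 1 by omega]
  simp only [hreflect]
  have hdom : Tendsto (fun n => ∑' t, if t < n then κ (t + 1) * b (n - 1 - t) else 0) atTop
      (𝓝 (∑' _ : ℕ, (0 : ℝ))) := by
    refine tendsto_tsum_of_dominated_convergence (bound := fun t => ‖κ (t + 1)‖ * B)
      (((summable_nat_add_iff 1).2 hκ).norm.mul_right B) (fun t => ?_)
      (Eventually.of_forall fun n t => ?_)
    · have hshift : Tendsto (fun n => b (n - 1 - t)) atTop (𝓝 0) :=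
        hb.comp ((tendsto_sub_atTop_nat (t + 1)).congr fun n => by rw [Nat.sub_sub, add_comm 1 t])
      refine ((hshift.const_mul (κ (t + 1))).congr' ?_).trans (by rw [mul_zero])
      filter_upwards [eventually_gt_atTop t] with n hn
      rw [if_pos hn]
    · split_ifs
      · rw [norm_mul]; exact mul_le_mul_of_nonneg_left (hB ⟨_, rfl⟩) (norm_nonneg _)
      · rw [norm_zero]; exact mul_nonneg (norm_nonneg _) hB₀
  rwa [tsum_zero] at hdom

lemma tendsto_sum_range_mul_div_of_summable {κ a : ℕ → ℝ} (hκ : Summable κ)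
    (hκ₀ : ∀ n, 0 ≤ κ n) (ha₀ : ∀ j, 0 ≤ a j)
    (ha : Tendsto (fun j : ℕ => a j / (j + 1)) atTop (𝓝 0)) :
    Tendsto (fun n : ℕ => (∑ j ∈ range n, κ (n - j) * a j) / n) atTop (𝓝 0) := by
  refine squeeze_zero (fun n => div_nonneg (sum_nonneg fun j _ => mul_nonneg (hκ₀ _) (ha₀ j))
    n.cast_nonneg) (fun n => ?_) (tendsto_sum_range_mul_sub_of_summable hκ ha)
  rw [sum_div]
  refine sum_le_sum fun j hj => ?_
  rw [mul_div_assoc]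
  have hjn : (j : ℝ) + 1 ≤ n := by exact_mod_cast mem_range.1 hj
  gcongr
  · exact hκ₀ _
  · exact ha₀ j

lemma tendsto_div_add_one_of_tendsto_average {x : ℕ → ℝ} {μ : ℝ}
    (hx : Tendsto (fun n : ℕ => (∑ j ∈ range n, x j) / n) atTop (𝓝 μ)) :
    Tendsto (fun n : ℕ => x n / (n + 1)) atTop (𝓝 0) := by
  have hsucc : Tendsto (fun n : ℕ => (∑ j ∈ range (n + 1), x j) / (n + 1)) atTop (𝓝 μ) := by
    simpa [Function.comp_def] using hx.comp (tendsto_add_atTop_nat 1)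
  have hlim := hsucc.sub (hx.mul (tendsto_natCast_div_add_atTop (1 : ℝ)))
  rw [mul_one, sub_self] at hlim
  refine hlim.congr fun n => ?_
  rcases n.eq_zero_or_pos with rfl | hn
  · simp
  · have : (n : ℝ) ≠ 0 := by positivity
    rw [sum_range_succ]
    field_simp
    ring

section Mixing

variable {ι : Type*} [Fintype ι] {v : ι → ℝ}

lemma abs_dotProduct_le_norm (hv₀ : ∀ ℓ, 0 ≤ v ℓ) (hv : ∑ ℓ, v ℓ = 1) (u : ι → ℝ) :
    |v ⬝ᵥ u| ≤ ‖u‖ :=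
  calc |v ⬝ᵥ u| ≤ ∑ ℓ, |v ℓ * u ℓ| := abs_sum_le_sum_abs _ _
    _ ≤ ∑ ℓ, v ℓ * ‖u‖ := sum_le_sum fun ℓ _ => by
        rw [abs_mul, abs_of_nonneg (hv₀ ℓ)]
        exact mul_le_mul_of_nonneg_left (norm_le_pi_norm u ℓ) (hv₀ ℓ)
    _ = ‖u‖ := by rw [← sum_mul, hv, one_mul]

lemma dotProduct_vecMul_of_mulVec_eq {B : Matrix ι ι ℝ} (hB : B *ᵥ v = v) (u : ι → ℝ) :
    v ⬝ᵥ (u ᵥ* B) = v ⬝ᵥ u := by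
  rw [dotProduct_comm, ← dotProduct_mulVec, hB, dotProduct_comm]

lemma pow_mulVec_of_mulVec_eq [DecidableEq ι] {A : Matrix ι ι ℝ} (hA : A *ᵥ v = v) (n : ℕ) :
    A ^ n *ᵥ v = v := by
  induction n with
  | zero => exact one_mulVec v
  | succ n ih => rw [pow_succ', ← mulVec_mulVec, ih, hA]

/-- Doeblin: `C ℓ k - c * v ℓ` is nonnegative with column sums `1 - c`, while the rank-one part
`c * v ℓ` is annihilated by `u`. -/
lemma norm_vecMul_le_of_minorization {C : Matrix ι ι ℝ} {c : ℝ} (hC : ∀ k, ∑ ℓ, C ℓ k = 1)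
    (hv : ∑ ℓ, v ℓ = 1) (hc : ∀ ℓ k, c * v ℓ ≤ C ℓ k) {u : ι → ℝ} (hu : v ⬝ᵥ u = 0) :
    ‖u ᵥ* C‖ ≤ (1 - c) * ‖u‖ := by
  have : Nonempty ι := univ_nonempty_iff.1 (nonempty_of_sum_ne_zero (hv ▸ one_ne_zero))
  refine (pi_norm_le_iff_of_nonempty _).2 fun k => ?_
  have hk : (u ᵥ* C) k = ∑ ℓ, (C ℓ k - c * v ℓ) * u ℓ := by
    rw [show ∑ ℓ, (C ℓ k - c * v ℓ) * u ℓ = ∑ ℓ, C ℓ k * u ℓ - c * (v ⬝ᵥ u) by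
      simp only [dotProduct, mul_sum, ← sum_sub_distrib, sub_mul, mul_assoc], hu, mul_zero,
      sub_zero]
    simp only [vecMul, dotProduct, mul_comm]
  calc ‖(u ᵥ* C) k‖ = |∑ ℓ, (C ℓ k - c * v ℓ) * u ℓ| := by rw [hk, Real.norm_eq_abs]
    _ ≤ ∑ ℓ, |(C ℓ k - c * v ℓ) * u ℓ| := abs_sum_le_sum_abs _ _
    _ ≤ ∑ ℓ, (C ℓ k - c * v ℓ) * ‖u‖ := sum_le_sum fun ℓ _ => by
        rw [abs_mul, abs_of_nonneg (sub_nonneg.2 (hc ℓ k))]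
        exact mul_le_mul_of_nonneg_left (norm_le_pi_norm u ℓ) (sub_nonneg.2 (hc ℓ k))
    _ = (1 - c) * ‖u‖ := by rw [← sum_mul, sum_sub_distrib, hC, ← mul_sum, hv, mul_one]

lemma norm_vecMul_pow_le [DecidableEq ι] {A : Matrix ι ι ℝ} {M : ℕ} {c : ℝ}
    (hA : A ∈ colStochastic ℝ ι) (hAv : A *ᵥ v = v) (hv : ∑ ℓ, v ℓ = 1) (hc₁ : c ≤ 1)
    (hc : ∀ ℓ k, c * v ℓ ≤ (A ^ M) ℓ k) {u : ι → ℝ} (hu : v ⬝ᵥ u = 0) (n : ℕ) :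
    ‖u ᵥ* A ^ n‖ ≤ (1 - c) ^ (n / M) * ‖u‖ := by
  have hinv (p : ℕ) : v ⬝ᵥ (u ᵥ* A ^ p) = 0 := by
    rw [dotProduct_vecMul_of_mulVec_eq (pow_mulVec_of_mulVec_eq hAv p), hu]
  have hcol (p : ℕ) : ∀ k, ∑ ℓ, (A ^ p) ℓ k = 1 :=
    sum_col_of_mem_colStochastic (pow_mem hA p)
  have hblock (q : ℕ) : ‖u ᵥ* A ^ (M * q)‖ ≤ (1 - c) ^ q * ‖u‖ := by
    induction q with
    | zero => simp
    | succ q ih =>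
      calc ‖u ᵥ* A ^ (M * (q + 1))‖ = ‖u ᵥ* A ^ (M * q) ᵥ* A ^ M‖ := by
            rw [vecMul_vecMul, ← pow_add, mul_add_one]
        _ ≤ (1 - c) * ‖u ᵥ* A ^ (M * q)‖ :=
            norm_vecMul_le_of_minorization (hcol M) hv hc (hinv _)
        _ ≤ (1 - c) * ((1 - c) ^ q * ‖u‖) := by gcongr
        _ = (1 - c) ^ (q + 1) * ‖u‖ := by ring
  calc ‖u ᵥ* A ^ n‖ = ‖u ᵥ* A ^ (M * (n / M)) ᵥ* A ^ (n % M)‖ := by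
        rw [vecMul_vecMul, ← pow_add, Nat.div_add_mod]
    _ ≤ (1 - 0) * ‖u ᵥ* A ^ (M * (n / M))‖ :=
        norm_vecMul_le_of_minorization (hcol _) hv
          (fun ℓ k => by simpa using nonneg_of_mem_colStochastic (pow_mem hA _)) (hinv _)
    _ ≤ (1 - c) ^ (n / M) * ‖u‖ := by rw [sub_zero, one_mul]; exact hblock _

lemma exists_pos_minorization {P : Matrix ι ι ℝ} (hP : ∀ ℓ k, 0 < P ℓ k) :
    ∃ c, 0 < c ∧ c ≤ 1 ∧ ∀ ℓ k, c * v ℓ ≤ P ℓ k := by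
  obtain ⟨K, hK⟩ := Finite.exists_le fun p : ι × ι => v p.1 / P p.1 p.2
  refine ⟨(max K 1)⁻¹, by positivity, inv_le_one_of_one_le₀ (le_max_right _ _), fun ℓ k => ?_⟩
  rw [inv_mul_le_iff₀ (by positivity)]
  exact (div_le_iff₀ (hP ℓ k)).1 ((hK (ℓ, k)).trans (le_max_left _ _))

lemma minorization_mul [DecidableEq ι] {B A : Matrix ι ι ℝ} {c : ℝ}
    (hB : ∀ ℓ k, c * v ℓ ≤ B ℓ k) (hA : A ∈ colStochastic ℝ ι) (ℓ k : ι) :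
    c * v ℓ ≤ (B * A) ℓ k :=
  calc c * v ℓ = ∑ j, c * v ℓ * A j k := by rw [← mul_sum, sum_col_of_mem_colStochastic hA, mul_one]
    _ ≤ ∑ j, B ℓ j * A j k :=
        sum_le_sum fun j _ => mul_le_mul_of_nonneg_right (hB ℓ j) (nonneg_of_mem_colStochastic hA)
    _ = (B * A) ℓ k := (mul_apply).symm

theorem exists_summable_mixing_bound [DecidableEq ι] {A : Matrix ι ι ℝ}
    (hA : A ∈ colStochastic ℝ ι) (hAv : A *ᵥ v = v) (hv₀ : ∀ ℓ, 0 < v ℓ) (hv : ∑ ℓ, v ℓ = 1)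
    (hprim : ∃ M, ∀ ℓ k, 0 < (A ^ M) ℓ k) :
    ∃ κ : ℕ → ℝ, Summable κ ∧ (∀ n, 0 ≤ κ n) ∧
      ∀ u n k, |(u ᵥ* A ^ n) k - v ⬝ᵥ u| ≤ κ n * ‖u‖ := by
  obtain ⟨M, hM⟩ := hprim
  obtain ⟨c, hc₀, hc₁, hc⟩ := exists_pos_minorization (v := v) hM
  have hc' : ∀ ℓ k, c * v ℓ ≤ (A ^ (M + 1)) ℓ k := by
    rw [pow_succ]; exact minorization_mul hc hA
  have hρ : 0 ≤ 1 - c := by linarith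
  refine ⟨fun n => 2 * (1 - c) ^ (n / (M + 1)),
    (summable_pow_div hρ (by linarith) (M + 1)).mul_left 2, fun n => by positivity,
    fun u n k => ?_⟩
  -- centring changes `u ᵥ* A ^ n` only by a constant vector, as `1 ᵥ* A ^ n = 1`
  set w := u - (v ⬝ᵥ u) • (1 : ι → ℝ)
  have hw : v ⬝ᵥ w = 0 := by simp [w, dotProduct_one, hv]
  have hwA : (u ᵥ* A ^ n) k - v ⬝ᵥ u = (w ᵥ* A ^ n) k := by
    simp [w, sub_vecMul, smul_vecMul, one_vecMul_of_mem_colStochastic (pow_mem hA n)]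
  have hw₂ : ‖w‖ ≤ 2 * ‖u‖ := by
    refine (pi_norm_le_iff_of_nonneg (by positivity)).2 fun ℓ => ?_
    calc ‖w ℓ‖ ≤ ‖u ℓ‖ + |v ⬝ᵥ u| := by simpa [w] using norm_sub_le (u ℓ) (v ⬝ᵥ u)
      _ ≤ ‖u‖ + ‖u‖ :=
        add_le_add (norm_le_pi_norm u ℓ) (abs_dotProduct_le_norm (fun ℓ => (hv₀ ℓ).le) hv u)
      _ = 2 * ‖u‖ := by ring
  calc |(u ᵥ* A ^ n) k - v ⬝ᵥ u| = ‖(w ᵥ* A ^ n) k‖ := by rw [hwA, Real.norm_eq_abs]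
    _ ≤ ‖w ᵥ* A ^ n‖ := norm_le_pi_norm _ k
    _ ≤ (1 - c) ^ (n / (M + 1)) * ‖w‖ := norm_vecMul_pow_le hA hAv hv hc₁ hc' hw n
    _ ≤ (1 - c) ^ (n / (M + 1)) * (2 * ‖u‖) := by gcongr
    _ = 2 * (1 - c) ^ (n / (M + 1)) * ‖u‖ := by ring

end Mixing

lemma eq_vecMul_pow_add_sum_of_succ_eq {ι R : Type*} [Fintype ι] [DecidableEq ι] [Semiring R]
    {A : Matrix ι ι R} {x y : ℕ → ι → R} (hy : ∀ i, y (i + 1) = (y i + x i) ᵥ* A) (i : ℕ) :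
    y i = y 0 ᵥ* A ^ i + ∑ j ∈ range i, x j ᵥ* A ^ (i - j) := by
  induction i with
  | zero => simp
  | succ i ih =>
    have hpow : ∀ j ∈ range i, x j ᵥ* A ^ (i - j) ᵥ* A = x j ᵥ* A ^ (i + 1 - j) := fun j hj => by
      rw [vecMul_vecMul, ← pow_succ, Nat.sub_add_comm (mem_range.1 hj).le]
    rw [hy, ih, add_vecMul, add_vecMul, vecMul_vecMul, ← pow_succ, sum_vecMul, sum_congr rfl hpow,
      sum_range_succ, Nat.add_sub_cancel_left, pow_one, add_assoc]

theorem tendsto_div_of_succ_eq_vecMul {ι : Type*} [Fintype ι] [DecidableEq ι]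
    {A : Matrix ι ι ℝ} {v : ι → ℝ} (hA : A ∈ colStochastic ℝ ι) (hAv : A *ᵥ v = v)
    (hv₀ : ∀ ℓ, 0 < v ℓ) (hv : ∑ ℓ, v ℓ = 1) (hprim : ∃ M, ∀ ℓ k, 0 < (A ^ M) ℓ k)
    {x y : ℕ → ι → ℝ} {μ : ι → ℝ}
    (hx : ∀ ℓ, Tendsto (fun n : ℕ => (∑ j ∈ range n, x j ℓ) / n) atTop (𝓝 (μ ℓ)))
    (hy : ∀ i, y (i + 1) = (y i + x i) ᵥ* A) (k : ι) :
    Tendsto (fun i : ℕ => y i k / i) atTop (𝓝 (v ⬝ᵥ μ)) := by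
  obtain ⟨κ, hκ, hκ₀, hmix⟩ := exists_summable_mixing_bound hA hAv hv₀ hv hprim
  set s : ℕ → ℝ := fun i => v ⬝ᵥ y 0 + ∑ j ∈ range i, v ⬝ᵥ x j
  have herr (i : ℕ) :
      |y i k - s i| ≤ κ i * ‖y 0‖ + ∑ j ∈ range i, κ (i - j) * ‖x j‖ := by
    rw [eq_vecMul_pow_add_sum_of_succ_eq hy i]
    calc |(y 0 ᵥ* A ^ i + ∑ j ∈ range i, x j ᵥ* A ^ (i - j)) k - s i|
        = |((y 0 ᵥ* A ^ i) k - v ⬝ᵥ y 0)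
            + ∑ j ∈ range i, ((x j ᵥ* A ^ (i - j)) k - v ⬝ᵥ x j)| := by
          simp only [s, Pi.add_apply, Finset.sum_apply, sum_sub_distrib]; ring_nf
      _ ≤ |(y 0 ᵥ* A ^ i) k - v ⬝ᵥ y 0|
            + ∑ j ∈ range i, |(x j ᵥ* A ^ (i - j)) k - v ⬝ᵥ x j| :=
          (abs_add_le _ _).trans (add_le_add_right (abs_sum_le_sum_abs _ _) _)
      _ ≤ _ := add_le_add (hmix _ _ _) (sum_le_sum fun j _ => hmix _ _ _)
  have hs : Tendsto (fun i : ℕ => s i / i) atTop (𝓝 (v ⬝ᵥ μ)) := by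
    have h := (tendsto_const_div_atTop_nhds_zero_nat (v ⬝ᵥ y 0)).add
      (tendsto_finsetSum univ fun ℓ _ => (hx ℓ).const_mul (v ℓ))
    rw [zero_add] at h
    refine h.congr fun i => ?_
    simp only [s, dotProduct, add_div, sum_div, mul_sum, mul_div_assoc]
    rw [sum_comm]
  have hxn : Tendsto (fun j : ℕ => ‖x j‖ / (j + 1)) atTop (𝓝 0) := by
    have h : Tendsto (fun j : ℕ => ((j : ℝ) + 1)⁻¹ • x j) atTop (𝓝 0) :=
      tendsto_pi_nhds.2 fun ℓ => by
        simpa [div_eq_inv_mul] using tendsto_div_add_one_of_tendsto_average (hx ℓ)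
    refine (norm_zero (E := ι → ℝ) ▸ h.norm).congr fun j => ?_
    rw [norm_smul, norm_inv, Real.norm_eq_abs, abs_of_pos (by positivity), inv_mul_eq_div]
  have herr_lim : Tendsto
      (fun i : ℕ => (κ i * ‖y 0‖ + ∑ j ∈ range i, κ (i - j) * ‖x j‖) / i) atTop (𝓝 0) := by
    simpa [add_div] using ((hκ.tendsto_atTop_zero.mul_const ‖y 0‖).div_atTop
      tendsto_natCast_atTop_atTop).add
      (tendsto_sum_range_mul_div_of_summable hκ hκ₀ (fun j => norm_nonneg _) hxn)
  have hdev : Tendsto (fun i : ℕ => (y i k - s i) / i) atTop (𝓝 0) :=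
    squeeze_zero_norm (fun i => by
      rw [norm_div, Real.norm_eq_abs, Real.norm_natCast]; gcongr; exact herr i) herr_lim
  simpa [← add_div] using hdev.add hs

lemma ae_tendsto_average_succ {ι Ω : Type*} [MeasurableSpace Ω] {P : Measure Ω}
    {X : ι → ℕ → Ω → ℝ} (hindep : iIndepFun (fun i ω ℓ => X ℓ i ω) P) {ℓ : ι}
    (hident : ∀ i, IdentDistrib (X ℓ i) (X ℓ 0) P P) (hint : Integrable (X ℓ 0) P) :
    ∀ᵐ ω ∂P, Tendsto (fun n : ℕ => (∑ j ∈ range n, X ℓ (j + 1) ω) / n) atTop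
      (𝓝 (∫ ω, X ℓ 0 ω ∂P)) := by
  have hpair : Pairwise (Function.onFun (IndepFun · · P) fun i => X ℓ (i + 1)) := fun i j hij =>
    (hindep.indepFun (by omega : i + 1 ≠ j + 1)).comp (measurable_pi_apply ℓ)
      (measurable_pi_apply ℓ)
  have hident' (i : ℕ) : IdentDistrib (X ℓ (i + 1)) (X ℓ (0 + 1)) P P :=
    (hident (i + 1)).trans (hident 1).symm
  rw [← (hident 1).integral_eq]
  exact strong_law_ae_real _ ((hident 1).integrable_iff.2 hint) hpair hident'

theorem network_time_averaging_limit_general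
    {N : ℕ}
    (A : Matrix (Fin N) (Fin N) ℝ)
    (hA_nonneg : ∀ ℓ k, 0 ≤ A ℓ k)
    (hA_stoch : ∀ k, ∑ ℓ, A ℓ k = 1)
    (hA_prim : ∃ m : ℕ, ∀ ℓ k, 0 < (A ^ m) ℓ k)
    (v : Fin N → ℝ)
    (hv_eig : A.mulVec v = v)
    (hv_sum : ∑ ℓ, v ℓ = 1)
    (hv_pos : ∀ ℓ, 0 < v ℓ)
    {Ω : Type*} [MeasurableSpace Ω] (P : Measure Ω)
    (Xv : Fin N → ℕ → Ω → ℝ)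
    -- independence across the time index of the joint vectors `(X_(1,i), …, X_(N,i))`
    (hX_indep : iIndepFun
      (fun i ω ℓ => Xv ℓ i ω) P)
    -- for each agent, identically distributed across time
    (hX_ident : ∀ ℓ i, IdentDistrib (Xv ℓ i) (Xv ℓ 0) P P)
    -- integrability and means
    (hX_int : ∀ ℓ, Integrable (Xv ℓ 0) P)
    (m : Fin N → ℝ) (hm : ∀ ℓ, m ℓ = ∫ ω, Xv ℓ 0 ω ∂P)
    -- the recursion, with deterministic initialization `y0`
    (y : Fin N → ℕ → Ω → ℝ)
    (hy : ∀ k i ω, y k (i + 1) ω = ∑ ℓ, A ℓ k * (y ℓ i ω + Xv ℓ (i + 1) ω)) :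
    ∀ k, ∀ᵐ ω ∂P,
      Tendsto (fun i : ℕ => y k i ω / (i : ℝ)) atTop (nhds (∑ ℓ, v ℓ * m ℓ)) := by
  intro k
  have hA : A ∈ colStochastic ℝ (Fin N) := mem_colStochastic_iff_sum.2 ⟨hA_nonneg, hA_stoch⟩
  have hslln : ∀ᵐ ω ∂P, ∀ ℓ,
      Tendsto (fun n : ℕ => (∑ j ∈ range n, Xv ℓ (j + 1) ω) / n) atTop (𝓝 (m ℓ)) :=
    ae_all_iff.2 fun ℓ => hm ℓ ▸ ae_tendsto_average_succ hX_indep (hX_ident ℓ) (hX_int ℓ)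
  filter_upwards [hslln] with ω hω
  refine tendsto_div_of_succ_eq_vecMul hA hv_eig hv_pos hv_sum hA_prim hω
    (y := fun i ℓ => y ℓ i ω) (fun i => funext fun k => ?_) k
  simp only [hy, vecMul, dotProduct, Pi.add_apply, mul_comm]

/-- Network time-averaging limit.
Let `A` be an `N×N` left-stochastic primitive matrix with Perron eigenvector `v`. Let
`(X_(ℓ,i))` be real random variables, independent across the time index `i`, such that for
each `ℓ` the sequence `(X_(ℓ,i))_i` is identically distributed and integrable with mean
`m_ℓ`. If `y_(k,0)` are deterministic reals and
`y_(k,i+1) = ∑_ℓ a_(ℓk) (y_(ℓ,i) + X_(ℓ,i+1))`, then for every `k`,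
`y_(k,i)/i → ∑_ℓ v_ℓ m_ℓ` almost surely. -/
theorem network_time_averaging_limit
    {N : ℕ} (hN : 0 < N)
    (A : Matrix (Fin N) (Fin N) ℝ)
    (hA_nonneg : ∀ ℓ k, 0 ≤ A ℓ k)
    (hA_stoch : ∀ k, ∑ ℓ, A ℓ k = 1)
    (hA_prim : ∃ m : ℕ, ∀ ℓ k, 0 < (A ^ m) ℓ k)
    (v : Fin N → ℝ)
    (hv_eig : A.mulVec v = v)
    (hv_sum : ∑ ℓ, v ℓ = 1)
    (hv_pos : ∀ ℓ, 0 < v ℓ)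
    {Ω : Type*} [MeasurableSpace Ω] (P : Measure Ω) [IsProbabilityMeasure P]
    (Xv : Fin N → ℕ → Ω → ℝ)
    (hX_meas : ∀ ℓ i, Measurable (Xv ℓ i))
    -- independence across the time index of the joint vectors `(X_(1,i), …, X_(N,i))`
    (hX_indep : iIndepFun
      (fun i ω ℓ => Xv ℓ i ω) P)
    -- for each agent, identically distributed across time
    (hX_ident : ∀ ℓ i, IdentDistrib (Xv ℓ i) (Xv ℓ 0) P P)
    -- integrability and means
    (hX_int : ∀ ℓ, Integrable (Xv ℓ 0) P)
    (m : Fin N → ℝ) (hm : ∀ ℓ, m ℓ = ∫ ω, Xv ℓ 0 ω ∂P)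
    -- the recursion, with deterministic initialization `y0`
    (y0 : Fin N → ℝ)
    (y : Fin N → ℕ → Ω → ℝ)
    (hy0 : ∀ k ω, y k 0 ω = y0 k)
    (hy : ∀ k i ω, y k (i + 1) ω = ∑ ℓ, A ℓ k * (y ℓ i ω + Xv ℓ (i + 1) ω)) :
    ∀ k, ∀ᵐ ω ∂P,
      Tendsto (fun i : ℕ => y k i ω / (i : ℝ)) atTop (nhds (∑ ℓ, v ℓ * m ℓ)) :=
  network_time_averaging_limit_general A hA_nonneg hA_stoch hA_prim v hv_eig hv_sum hv_pos P Xv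
    hX_indep hX_ident hX_int m hm y hy
end
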